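/- Let c_e, c₁, c₃ be real constants and let B: I → (0,∞) be differentiable on an open interval I ⊆ (0,∞) with c₁ r⁴ B(r)⁴ + c₃ c_e ≠ 0 on I, satisfying the ODE B'(r)/B(r) = c_e / (r·(c₁ r⁴ B(r)⁴ + c₃ c_e)) for all r ∈ I. Then the function r ↦ B(r)^{4c₃}·((c₃+1)·c_e·r⁻⁴ + c₁·B(r)⁴) is constant on I. -/

import Mathlib

/-!
With `D = c₁ r⁴ B⁴ + c₃ c_e`, the product rule gives
`F' = 4 (c₃ + 1) B^{4c₃-1} (B' r D - c_e B) / r⁵` for `F = B^{4c₃} ((c₃+1) c_e r⁻⁴ + c₁ B⁴)`,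
and the ODE, cleared of denominators, says exactly that `B' r D = c_e B`.
So `F' = 0` on the interval, which is connected, and `F` is constant there.
-/

open Real Filter Topology Set

noncomputable def firstIntegral (c_e c₁ c₃ : ℝ) (B : ℝ → ℝ) (r : ℝ) : ℝ :=
  B r ^ (4 * c₃) * ((c₃ + 1) * c_e * (r ^ 4)⁻¹ + c₁ * B r ^ 4)

theorem hasDerivAt_firstIntegral {c_e c₁ c₃ B' r : ℝ} {B : ℝ → ℝ}
    (hB : HasDerivAt B B' r) (hBr : 0 < B r) (hr : r ≠ 0) :
    HasDerivAt (firstIntegral c_e c₁ c₃ B)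
      (4 * (c₃ + 1) * B r ^ (4 * c₃ - 1) *
        (B' * (r * (c₁ * r ^ 4 * B r ^ 4 + c₃ * c_e)) - c_e * B r) / r ^ 5) r := by
  have hpow : HasDerivAt (fun r => B r ^ (4 * c₃)) (B' * (4 * c₃) * B r ^ (4 * c₃ - 1)) r :=
    hB.rpow_const (Or.inl hBr.ne')
  have hinv : HasDerivAt (fun r : ℝ => (r ^ 4)⁻¹) (-(↑4 * r ^ 3) / (r ^ 4) ^ 2) r :=
    (hasDerivAt_pow 4 r).inv (pow_ne_zero 4 hr)
  have hsum := (hinv.const_mul ((c₃ + 1) * c_e)).add ((hB.pow 4).const_mul c₁)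
  refine (hpow.mul hsum).congr_deriv ?_
  simp only [Pi.add_apply, Pi.pow_apply]
  rw [rpow_sub_one hBr.ne']
  field_simp
  ring

/-- If `B : (a,b) → (0,∞)` (with `(a,b) ⊆ (0,∞)`) is differentiable with
`c₁ r⁴B⁴ + c₃c_e ≠ 0` and satisfies the ODE `B'/B = c_e/(r(c₁r⁴B⁴ + c₃c_e))`, then
`r ↦ B^{4c₃}·((c₃+1)c_e r⁻⁴ + c₁B⁴)` is constant on `(a,b)`. -/
theorem B_algebraic_first_integral
    (a b c_e c₁ c₃ : ℝ) (ha : 0 ≤ a)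
    (B : ℝ → ℝ)
    (hBpos : ∀ r ∈ Ioo a b, 0 < B r)
    (hBdiff : ∀ r ∈ Ioo a b, DifferentiableAt ℝ B r)
    (hden : ∀ r ∈ Ioo a b, c₁ * r ^ 4 * B r ^ 4 + c₃ * c_e ≠ 0)
    (hode : ∀ r ∈ Ioo a b,
      deriv B r / B r = c_e / (r * (c₁ * r ^ 4 * B r ^ 4 + c₃ * c_e))) :
    ∃ c : ℝ, ∀ r ∈ Ioo a b,
      B r ^ (4 * c₃) * ((c₃ + 1) * c_e * (r ^ 4)⁻¹ + c₁ * B r ^ 4) = c := by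
  have hderiv : ∀ r ∈ Ioo a b, HasDerivAt (firstIntegral c_e c₁ c₃ B) 0 r := by
    intro r hr
    have hr0 : r ≠ 0 := (ha.trans_lt hr.1).ne'
    have hode' : deriv B r * (r * (c₁ * r ^ 4 * B r ^ 4 + c₃ * c_e)) = c_e * B r := by
      have := hode r hr
      rwa [div_eq_div_iff (hBpos r hr).ne' (mul_ne_zero hr0 (hden r hr))] at this
    simpa [hode'] using hasDerivAt_firstIntegral (c_e := c_e) (c₁ := c₁) (c₃ := c₃)
      (hBdiff r hr).hasDerivAt (hBpos r hr) hr0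
  exact isOpen_Ioo.exists_is_const_of_deriv_eq_zero isPreconnected_Ioo
    (fun r hr => (hderiv r hr).differentiableAt.differentiableWithinAt)
    (fun r hr => (hderiv r hr).deriv)
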